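/- Let F=F(A,B) be a bipartite graph in which every vertex u ∈ A satisfies deg(u;B) ≥ δ|B|. Suppose Y ⊆ B satisfies (δ(1+η/2)−2γ)(1−η)|B| < |Y| ≤ (δ(1+η/2)−2γ)|B|, and X ⊆ A is such that every u ∈ X has at most 2γ|B| neighbors in B−Y. If 0 < η ≤ 1/6 and 0 < γ ≤ min{η/4, δ/20}, then for every u ∈ X and every Y' ⊆ Y with |Y'| = η|Y| we have deg(u;Y') ≥ γ|Y'|; consequently F[X,Y] is a lower (ε,η,γ)-regular pair for every ε > 0. -/

import Mathlib

/-!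
Every `u ∈ X` has degree at least `δ|B|`, of which at most `2γ|B|` lies outside `Y`, so
`deg(u; Y) ≥ (δ - 2γ)|B|`. Because `|Y|` is at most `(δ(1 + η/2) - 2γ)|B|`, this means `u` misses
at most an `η(1 - γ)` fraction of `Y`; hence any `Y' ⊆ Y` with `|Y'| ≥ η|Y|` keeps at least a
`γ` fraction of its vertices adjacent to `u`. Summing over `u ∈ X'` gives lower regularity,
with no condition on `|X'|`.
-/

open Finset

/-- Number of edges between `X` and `Y` for a bipartite adjacency relation `E`. -/
def eCount {α β : Type*} (E : α → β → Prop) [∀ a b, Decidable (E a b)]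
    (X : Finset α) (Y : Finset β) : ℕ :=
  ((X ×ˢ Y).filter fun p => E p.1 p.2).card

/-- Number of neighbors of `u` inside `S`. -/
def degIn {α β : Type*} (E : α → β → Prop) [∀ a b, Decidable (E a b)]
    (u : α) (S : Finset β) : ℕ :=
  (S.filter fun y => E u y).card

/-- `(X, Y)` is a lower `(ε, η, γ)`-regular pair. -/
def LowerRegular {α β : Type*} (E : α → β → Prop) [∀ a b, Decidable (E a b)]
    (ε η γ : ℝ) (X : Finset α) (Y : Finset β) : Prop :=
  ∀ X' ⊆ X, ∀ Y' ⊆ Y, ε * X.card ≤ X'.card → η * Y.card ≤ Y'.card →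
    γ * X'.card * Y'.card ≤ eCount E X' Y'

section Degrees

variable {α β : Type*} (E : α → β → Prop) [∀ a b, Decidable (E a b)]

lemma eCount_eq_sum_degIn (X : Finset α) (Y : Finset β) :
    eCount E X Y = ∑ u ∈ X, degIn E u Y := by
  rw [eCount, card_filter, sum_product]
  exact sum_congr rfl fun u _ => by rw [degIn, card_filter]

lemma degIn_le_card (u : α) (S : Finset β) : degIn E u S ≤ #S :=
  card_filter_le _ _

variable [DecidableEq β]

lemma degIn_add_degIn_sdiff (u : α) {Y B : Finset β} (h : Y ⊆ B) :
    degIn E u Y + degIn E u (B \ Y) = degIn E u B := by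
  rw [degIn, degIn, degIn, ← card_union_of_disjoint (disjoint_filter_filter disjoint_sdiff),
    ← filter_union, union_sdiff_of_subset h]

lemma degIn_le_degIn_add_card_sdiff (u : α) {Y' Y : Finset β} (h : Y' ⊆ Y) :
    degIn E u Y ≤ degIn E u Y' + #(Y \ Y') := by
  rw [← degIn_add_degIn_sdiff E u h]
  exact Nat.add_le_add_left (degIn_le_card E u _) _

lemma mul_card_le_degIn_of_subset {η γ : ℝ} (hγ : γ ≤ 1) {u : α} {Y' Y : Finset β}
    (hY' : Y' ⊆ Y) (hcard : η * #Y ≤ #Y')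
    (hu : (1 - η * (1 - γ)) * #Y ≤ degIn E u Y) :
    γ * #Y' ≤ degIn E u Y' := by
  have hmiss : (degIn E u Y : ℝ) ≤ degIn E u Y' + (#Y - #Y') := by
    rw [← Nat.cast_sub (card_le_card hY'), ← card_sdiff_of_subset hY']
    exact_mod_cast degIn_le_degIn_add_card_sdiff E u hY'
  nlinarith [mul_le_mul_of_nonneg_left hcard (sub_nonneg.mpr hγ)]

end Degrees

lemma lowerRegular_of_forall_mul_card_le_degIn {α β : Type*} {E : α → β → Prop}
    [∀ a b, Decidable (E a b)] {ε η γ : ℝ} {X : Finset α} {Y : Finset β}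
    (h : ∀ u ∈ X, ∀ Y' ⊆ Y, η * #Y ≤ #Y' → γ * #Y' ≤ degIn E u Y') :
    LowerRegular E ε η γ X Y := by
  intro X' hX' Y' hY' _ hcard
  rw [eCount_eq_sum_degIn, mul_comm γ, mul_assoc, ← nsmul_eq_mul, ← sum_const, Nat.cast_sum]
  exact sum_le_sum fun u hu => h u (hX' hu) Y' hY' hcard

lemma one_sub_mul_mul_stoppingBound_le {δ η γ : ℝ} (hγ₀ : 0 ≤ γ) (hγη : γ ≤ η / 4)
    (hη : η ≤ 1 / 6) (hγδ : γ ≤ δ / 20) :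
    (1 - η * (1 - γ)) * (δ * (1 + η / 2) - 2 * γ) ≤ δ - 2 * γ := by
  have hη₀ : 0 ≤ η := by linarith
  have hfactor : 1 / 2 - γ ≤ (1 - γ) * (1 + η / 2) - 1 / 2 := by nlinarith
  have hbracket : 2 * γ * (1 - γ) ≤ δ * ((1 - γ) * (1 + η / 2) - 1 / 2) := by
    nlinarith [mul_le_mul_of_nonneg_left hfactor (by linarith : (0 : ℝ) ≤ δ)]
  have hsplit : δ - 2 * γ - (1 - η * (1 - γ)) * (δ * (1 + η / 2) - 2 * γ)
      = η * (δ * ((1 - γ) * (1 + η / 2) - 1 / 2) - 2 * γ * (1 - γ)) := by ring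
  nlinarith [mul_nonneg hη₀ (sub_nonneg.mpr hbracket)]

theorem stopping_rule_lower_regular_general {α β : Type*} [DecidableEq β] (E : α → β → Prop)
    [∀ a b, Decidable (E a b)] (A : Finset α) (B : Finset β)
    (δ η γ : ℝ)
    (hdeg : ∀ u ∈ A, δ * (B.card : ℝ) ≤ (degIn E u B : ℝ))
    (X : Finset α) (Y : Finset β) (hXA : X ⊆ A) (hYB : Y ⊆ B)
    (hYhigh : (Y.card : ℝ) ≤ (δ * (1 + η / 2) - 2 * γ) * (B.card : ℝ))
    (hout : ∀ u ∈ X, (degIn E u (B \ Y) : ℝ) ≤ 2 * γ * (B.card : ℝ))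
    (hη₁ : η ≤ 1 / 6)
    (hγ₀ : 0 < γ) (hγ₁ : γ ≤ min (η / 4) (δ / 20)) :
    (∀ u ∈ X, ∀ Y' ⊆ Y, (Y'.card : ℝ) = η * (Y.card : ℝ) →
        γ * (Y'.card : ℝ) ≤ (degIn E u Y' : ℝ)) ∧
    ∀ ε : ℝ, 0 < ε → LowerRegular E ε η γ X Y := by
  obtain ⟨hγη, hγδ⟩ := le_min_iff.mp hγ₁
  have hdense : ∀ u ∈ X, ∀ Y' ⊆ Y, η * #Y ≤ #Y' → γ * #Y' ≤ degIn E u Y' := by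
    intro u hu Y' hY' hcard
    refine mul_card_le_degIn_of_subset E (by linarith) hY' hcard ?_
    have hsplit : (degIn E u Y : ℝ) + degIn E u (B \ Y) = degIn E u B := by
      exact_mod_cast degIn_add_degIn_sdiff E u hYB
    calc (1 - η * (1 - γ)) * #Y
        ≤ (1 - η * (1 - γ)) * ((δ * (1 + η / 2) - 2 * γ) * #B) :=
          mul_le_mul_of_nonneg_left hYhigh (by nlinarith)
      _ ≤ (δ - 2 * γ) * #B := by
          rw [← mul_assoc]
          exact mul_le_mul_of_nonneg_right
            (one_sub_mul_mul_stoppingBound_le hγ₀.le hγη hη₁ hγδ) (Nat.cast_nonneg _)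
      _ ≤ degIn E u Y := by linarith [hdeg u (hXA hu), hout u hu]
  exact ⟨fun u hu Y' hY' hcard => hdense u hu Y' hY' hcard.ge,
    fun _ _ => lowerRegular_of_forall_mul_card_le_degIn hdense⟩

/-- The stopping-rule analysis: once `|Y|` has shrunk into the critical window and every
vertex of `X` has few neighbors outside `Y`, the pair `F[X, Y]` is lower regular. -/
theorem stopping_rule_lower_regular {α β : Type*} [DecidableEq β] (E : α → β → Prop)
    [∀ a b, Decidable (E a b)] (A : Finset α) (B : Finset β)
    (δ η γ : ℝ)
    (hdeg : ∀ u ∈ A, δ * (B.card : ℝ) ≤ (degIn E u B : ℝ))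
    (X : Finset α) (Y : Finset β) (hXA : X ⊆ A) (hYB : Y ⊆ B)
    (hYlow : (δ * (1 + η / 2) - 2 * γ) * (1 - η) * (B.card : ℝ) < (Y.card : ℝ))
    (hYhigh : (Y.card : ℝ) ≤ (δ * (1 + η / 2) - 2 * γ) * (B.card : ℝ))
    (hout : ∀ u ∈ X, (degIn E u (B \ Y) : ℝ) ≤ 2 * γ * (B.card : ℝ))
    (hη₀ : 0 < η) (hη₁ : η ≤ 1 / 6)
    (hγ₀ : 0 < γ) (hγ₁ : γ ≤ min (η / 4) (δ / 20)) :
    (∀ u ∈ X, ∀ Y' ⊆ Y, (Y'.card : ℝ) = η * (Y.card : ℝ) →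
        γ * (Y'.card : ℝ) ≤ (degIn E u Y' : ℝ)) ∧
    ∀ ε : ℝ, 0 < ε → LowerRegular E ε η γ X Y :=
  stopping_rule_lower_regular_general E A B δ η γ hdeg X Y hXA hYB hYhigh hout hη₁ hγ₀ hγ₁
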